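/- arXiv:2206.08207 — 2 statements merged into one kernel-verified Lean document; each statement's English description precedes it below -/
import Mathlib

section
/- Let F be the Minkowskian product of Finsler metrics F₁ and F₂ with respect to a product function f. Then at every point (x,y) = ((x₁,x₂),(y₁,y₂)) with y₁ ≠ 0 and y₂ ≠ 0, the Berwald connection coefficients Γ̌^α_{β;γ} = ∂²𝔾^α/∂y^β∂y^γ of F satisfy: Γ̌^i_{j;l}(x,y) = Γ̌₁^i_{j;l}(x₁,y₁), Γ̌^{i'}_{j';l'}(x,y) = Γ̌₂^{i'}_{j';l'}(x₂,y₂), and all mixed coefficients vanish: Γ̌^i_{j';l} = Γ̌^i_{j;l'} = Γ̌^i_{j';l'} = Γ̌^{i'}_{j';l} = Γ̌^{i'}_{j;l'} = Γ̌^{i'}_{j;l} = 0, where Γ̌₁ and Γ̌₂ are the Berwald connection coefficients of F₁ and F₂. -/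
open Matrix

/-- Partial derivative in the fiber variable `y` in the direction of the `α`-th
coordinate, for a function `g (x, y)` of a base point and a fiber vector. -/
noncomputable def pdy {ι : Type*} [Fintype ι] [DecidableEq ι]
    (g : (ι → ℝ) → (ι → ℝ) → ℝ) (α : ι) : (ι → ℝ) → (ι → ℝ) → ℝ :=
  fun x y => fderiv ℝ (g x) y (Pi.single α 1)

/-- Partial derivative in the base variable `x` in the direction of the `γ`-th
coordinate, for a function `g (x, y)` of a base point and a fiber vector. -/
noncomputable def pdx {ι : Type*} [Fintype ι] [DecidableEq ι]
    (g : (ι → ℝ) → (ι → ℝ) → ℝ) (γ : ι) : (ι → ℝ) → (ι → ℝ) → ℝ :=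
  fun x y => fderiv ℝ (fun x' => g x' y) x (Pi.single γ 1)

/-- The fundamental tensor `(G_{αβ}) = (∂²(F²)/∂y^α∂y^β)` of a Finsler metric `F`. -/
noncomputable def fundTensor {ι : Type*} [Fintype ι] [DecidableEq ι]
    (F : (ι → ℝ) → (ι → ℝ) → ℝ) (x y : ι → ℝ) : Matrix ι ι ℝ :=
  fun α β => pdy (pdy (fun x' y' => (F x' y') ^ 2) β) α x y

/-- `F` is a Finsler metric on the open set `U`: `G = F²` is smooth on the slit
domain, `F` is positive for `y ≠ 0`, absolutely 1-homogeneous in `y`, and its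
fundamental tensor is positive definite for `y ≠ 0`. -/
structure IsFinslerMetric {ι : Type*} [Fintype ι] [DecidableEq ι]
    (U : Set (ι → ℝ)) (F : (ι → ℝ) → (ι → ℝ) → ℝ) : Prop where
  isOpen : IsOpen U
  smooth : ContDiffOn ℝ (⊤ : ℕ∞) (fun p : (ι → ℝ) × (ι → ℝ) => (F p.1 p.2) ^ 2)
    (U ×ˢ {y | y ≠ 0})
  pos : ∀ x ∈ U, ∀ y : ι → ℝ, y ≠ 0 → 0 < F x y
  homog : ∀ x ∈ U, ∀ (y : ι → ℝ) (c : ℝ), F x (c • y) = |c| * F x y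
  posDef : ∀ x ∈ U, ∀ y : ι → ℝ, y ≠ 0 → (fundTensor F x y).PosDef

/-- The geodesic spray coefficients
`𝔾^α = ½ G^{αβ}(∂²G/∂y^β∂x^γ · y^γ − ∂G/∂x^β)` of a Finsler metric `F`. -/
noncomputable def spray {ι : Type*} [Fintype ι] [DecidableEq ι]
    (F : (ι → ℝ) → (ι → ℝ) → ℝ) (α : ι) : (ι → ℝ) → (ι → ℝ) → ℝ :=
  fun x y => (1 / 2) * ∑ β, (fundTensor F x y)⁻¹ α β *
    ((∑ γ, pdx (pdy (fun x' y' => (F x' y') ^ 2) β) γ x y * y γ) -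
      pdx (fun x' y' => (F x' y') ^ 2) β x y)

/-- The Cartan nonlinear connection coefficients `Γ^α_β = ∂𝔾^α/∂y^β`. -/
noncomputable def nonlinConn {ι : Type*} [Fintype ι] [DecidableEq ι]
    (F : (ι → ℝ) → (ι → ℝ) → ℝ) (α β : ι) : (ι → ℝ) → (ι → ℝ) → ℝ :=
  pdy (spray F α) β

/-- The Berwald connection coefficients `Γ̌^α_{β;γ} = ∂Γ^α_γ/∂y^β = ∂²𝔾^α/∂y^β∂y^γ`. -/
noncomputable def berwaldConn {ι : Type*} [Fintype ι] [DecidableEq ι]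
    (F : (ι → ℝ) → (ι → ℝ) → ℝ) (α β γ : ι) : (ι → ℝ) → (ι → ℝ) → ℝ :=
  pdy (nonlinConn F α γ) β

/-- The Berwald curvature `B^α_{βγη} = ∂³𝔾^α/∂y^β∂y^γ∂y^η`. -/
noncomputable def berwaldCurv {ι : Type*} [Fintype ι] [DecidableEq ι]
    (F : (ι → ℝ) → (ι → ℝ) → ℝ) (α β γ η : ι) : (ι → ℝ) → (ι → ℝ) → ℝ :=
  pdy (pdy (pdy (spray F α) η) γ) β

/-- The mean Berwald curvature `E_{βγ} = ½ B^α_{βγα}` (sum over `α`). -/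
noncomputable def meanBerwaldCurv {ι : Type*} [Fintype ι] [DecidableEq ι]
    (F : (ι → ℝ) → (ι → ℝ) → ℝ) (β γ : ι) : (ι → ℝ) → (ι → ℝ) → ℝ :=
  fun x y => (1 / 2) * ∑ α, berwaldCurv F α β γ α x y

/-- The Landsberg curvature `L_{βγη} = −¼ y^ν G_{να} B^α_{βγη}` (sums over `ν, α`). -/
noncomputable def landsbergCurv {ι : Type*} [Fintype ι] [DecidableEq ι]
    (F : (ι → ℝ) → (ι → ℝ) → ℝ) (β γ η : ι) : (ι → ℝ) → (ι → ℝ) → ℝ :=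
  fun x y => -(1 / 4) * ∑ ν, ∑ α, y ν * fundTensor F x y ν α * berwaldCurv F α β γ η x y

/-- The mean Landsberg curvature `J_α = 2 G^{βγ} L_{αβγ}` (sums over `β, γ`). -/
noncomputable def meanLandsbergCurv {ι : Type*} [Fintype ι] [DecidableEq ι]
    (F : (ι → ℝ) → (ι → ℝ) → ℝ) (α : ι) : (ι → ℝ) → (ι → ℝ) → ℝ :=
  fun x y => 2 * ∑ β, ∑ γ, (fundTensor F x y)⁻¹ β γ * landsbergCurv F α β γ x y

/-- Partial derivative of `f : ℝ → ℝ → ℝ` with respect to the first variable. -/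
noncomputable def pderivS (f : ℝ → ℝ → ℝ) (s t : ℝ) : ℝ := deriv (fun u => f u t) s

/-- Partial derivative of `f : ℝ → ℝ → ℝ` with respect to the second variable. -/
noncomputable def pderivT (f : ℝ → ℝ → ℝ) (s t : ℝ) : ℝ := deriv (fun v => f s v) t

/-- `f_st = ∂²f/∂s∂t`. -/
noncomputable def pderivST (f : ℝ → ℝ → ℝ) (s t : ℝ) : ℝ :=
  deriv (fun u => pderivT f u t) s

/-- The data of a Minkowskian product: `F₁, F₂` are Finsler metrics on `U₁, U₂`,
`f` is an admissible product function, and `F = √(f(F₁², F₂²))` is the Minkowskian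
product metric, itself assumed to be a Finsler metric on `U₁ × U₂`. -/
structure IsMinkowskianProduct {m n : ℕ}
    (U₁ : Set (Fin m → ℝ)) (U₂ : Set (Fin n → ℝ))
    (F₁ : (Fin m → ℝ) → (Fin m → ℝ) → ℝ) (F₂ : (Fin n → ℝ) → (Fin n → ℝ) → ℝ)
    (f : ℝ → ℝ → ℝ)
    (F : (Fin m ⊕ Fin n → ℝ) → (Fin m ⊕ Fin n → ℝ) → ℝ) : Prop where
  finsler₁ : IsFinslerMetric U₁ F₁
  finsler₂ : IsFinslerMetric U₂ F₂
  f_cont : ContinuousOn (fun p : ℝ × ℝ => f p.1 p.2) (Set.Ici 0 ×ˢ Set.Ici 0)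
  f_nonneg : ∀ s ∈ Set.Ici (0 : ℝ), ∀ t ∈ Set.Ici (0 : ℝ), 0 ≤ f s t
  f_zero_iff : ∀ s ∈ Set.Ici (0 : ℝ), ∀ t ∈ Set.Ici (0 : ℝ),
    (f s t = 0 ↔ s = 0 ∧ t = 0)
  f_homog : ∀ c ∈ Set.Ici (0 : ℝ), ∀ s ∈ Set.Ici (0 : ℝ), ∀ t ∈ Set.Ici (0 : ℝ),
    f (c * s) (c * t) = c * f s t
  f_smooth : ContDiffOn ℝ (⊤ : ℕ∞) (fun p : ℝ × ℝ => f p.1 p.2)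
    (Set.Ioi 0 ×ˢ Set.Ioi 0)
  fs_ne : ∀ s > (0 : ℝ), ∀ t > (0 : ℝ), pderivS f s t ≠ 0
  ft_ne : ∀ s > (0 : ℝ), ∀ t > (0 : ℝ), pderivT f s t ≠ 0
  delta_ne : ∀ s > (0 : ℝ), ∀ t > (0 : ℝ),
    pderivS f s t * pderivT f s t - 2 * f s t * pderivST f s t ≠ 0
  F_def : ∀ (x y : Fin m ⊕ Fin n → ℝ),
    F x y = Real.sqrt (f ((F₁ (x ∘ Sum.inl) (y ∘ Sum.inl)) ^ 2)
      ((F₂ (x ∘ Sum.inr) (y ∘ Sum.inr)) ^ 2))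
  finsler : IsFinslerMetric
    {x : Fin m ⊕ Fin n → ℝ | (x ∘ Sum.inl) ∈ U₁ ∧ (x ∘ Sum.inr) ∈ U₂} F


/-!
Coordinate-free, the spray `Z = 𝔾(x, y)` of an energy `G = F²` is the solution of the linear
system `D²G((0, u), (0, 2Z)) = D²G((y, 0), (0, u)) - DG(u, 0)` for all `u`.
For a Minkowskian product `G = f(K, H)`, where `K` and `H` only see the first, resp. second,
block of coordinates, the chain rule writes `D²G` as `f_s D²K + f_t D²H` plus the Hessian of `f`
evaluated on first derivatives of `K` and `H`. The vector `Z = (𝔾₁, 𝔾₂)` solves the systems of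
both `K` and `H`, which takes care of the first part; the Hessian part matches because `D²f` is
symmetric and `K, H` are conserved along their sprays, `DK(y₁, -2𝔾₁) = 0`, a consequence of Euler's
relation for the 2-homogeneous `K`. Hence `𝔾 = (𝔾₁(x₁, y₁), 𝔾₂(x₂, y₂))` on the open set
`y₁ ≠ 0, y₂ ≠ 0`, and differentiating twice in `y` splits the Berwald coefficients.
-/

open Function Filter Set Topology

section Calculus

variable {𝕜 : Type*} [NontriviallyNormedField 𝕜] {E F G : Type*} [NormedAddCommGroup E]
  [NormedSpace 𝕜 E] [NormedAddCommGroup F] [NormedSpace 𝕜 F] [NormedAddCommGroup G]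
  [NormedSpace 𝕜 G]

theorem fderiv_comp_clm_of_rightInverse {R : E →L[𝕜] F} {S : F →L[𝕜] E}
    (hRS : RightInverse S R) (h : F → G) (y : E) :
    fderiv 𝕜 (fun y' => h (R y')) y = (fderiv 𝕜 h (R y)).comp R := by
  by_cases hh : DifferentiableAt 𝕜 h (R y)
  · exact (hh.hasFDerivAt.comp y R.hasFDerivAt).fderiv
  have hcomp : ¬ DifferentiableAt 𝕜 (fun y' => h (R y')) y := by
    intro hd
    -- `h` factors through `h ∘ R` via the affine section `z ↦ y + S (z - R y)`
    have hd' : DifferentiableAt 𝕜 (fun y' => h (R y')) (y + S (R y - R y)) := by simpa using hd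
    refine hh ((hd'.comp (f := fun z => y + S (z - R y)) (R y) (by fun_prop)).congr_of_eventuallyEq
      (Eventually.of_forall fun z => ?_))
    simp only [Function.comp_apply, map_add, hRS (z - R y), add_sub_cancel]
  rw [fderiv_zero_of_not_differentiableAt hh, fderiv_zero_of_not_differentiableAt hcomp,
    ContinuousLinearMap.zero_comp]

theorem fderiv_fderiv_apply {f : E → F} {p : E} (hf : DifferentiableAt 𝕜 (fderiv 𝕜 f) p)
    (v w : E) : fderiv 𝕜 (fun q => fderiv 𝕜 f q v) p w = fderiv 𝕜 (fderiv 𝕜 f) p w v := by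
  rw [fderiv_clm_apply hf (differentiableAt_const v)]
  simp

theorem ContDiffAt.eventually_differentiableAt {f : E → F} {p : E} (hf : ContDiffAt 𝕜 2 f p) :
    ∀ᶠ q in 𝓝 p, DifferentiableAt 𝕜 f q :=
  (hf.eventually (by simp)).mono fun _ hq => hq.differentiableAt (by simp)

theorem ContDiffAt.differentiableAt_fderiv {f : E → F} {p : E} (hf : ContDiffAt 𝕜 2 f p) :
    DifferentiableAt 𝕜 (fderiv 𝕜 f) p :=
  (hf.fderiv_right (m := 1) (by norm_num)).differentiableAt (by simp)

theorem fderiv_comp_clm_apply {g : F → 𝕜} (L : E →L[𝕜] F) {p : E}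
    (hg : DifferentiableAt 𝕜 g (L p)) (v : E) :
    fderiv 𝕜 (fun q => g (L q)) p v = fderiv 𝕜 g (L p) (L v) :=
  DFunLike.congr_fun (hg.hasFDerivAt.comp p L.hasFDerivAt).fderiv v

theorem fderiv_comp_prodMk_apply {φ : 𝕜 × 𝕜 → 𝕜} {a b : E → 𝕜} {p : E}
    (hφ : DifferentiableAt 𝕜 φ (a p, b p)) (ha : DifferentiableAt 𝕜 a p)
    (hb : DifferentiableAt 𝕜 b p) (v : E) :
    fderiv 𝕜 (fun q => φ (a q, b q)) p v = fderiv 𝕜 φ (a p, b p) (fderiv 𝕜 a p v, fderiv 𝕜 b p v) :=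
  DFunLike.congr_fun (hφ.hasFDerivAt.comp p (ha.hasFDerivAt.prodMk hb.hasFDerivAt)).fderiv v

theorem fderiv_fderiv_comp_clm {g : F → 𝕜} (L : E →L[𝕜] F) {p : E} (hg : ContDiffAt 𝕜 2 g (L p))
    (w v : E) :
    fderiv 𝕜 (fderiv 𝕜 fun q => g (L q)) p w v = fderiv 𝕜 (fderiv 𝕜 g) (L p) (L w) (L v) := by
  have hev : fderiv 𝕜 (fun q => g (L q)) =ᶠ[𝓝 p] fun q => (fderiv 𝕜 g (L q)).comp L :=
    (L.continuous.continuousAt.eventually hg.eventually_differentiableAt).mono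
      fun q hq => (hq.hasFDerivAt.comp q L.hasFDerivAt).fderiv
  have hd : HasFDerivAt (fun q => (fderiv 𝕜 g (L q)).comp L)
      (((ContinuousLinearMap.compL 𝕜 E F 𝕜).flip L).comp
        ((fderiv 𝕜 (fderiv 𝕜 g) (L p)).comp L)) p :=
    ((ContinuousLinearMap.compL 𝕜 E F 𝕜).flip L).hasFDerivAt.comp p
      (hg.differentiableAt_fderiv.hasFDerivAt.comp p L.hasFDerivAt)
  rw [hev.fderiv_eq, hd.fderiv]
  simp

theorem fderiv_fderiv_comp_prodMk {φ : 𝕜 × 𝕜 → 𝕜} {a b : E → 𝕜} {p : E}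
    (hφ : ContDiffAt 𝕜 2 φ (a p, b p)) (ha : ContDiffAt 𝕜 2 a p) (hb : ContDiffAt 𝕜 2 b p)
    (w v : E) :
    fderiv 𝕜 (fderiv 𝕜 fun q => φ (a q, b q)) p w v =
      fderiv 𝕜 (fderiv 𝕜 φ) (a p, b p) (fderiv 𝕜 a p w, fderiv 𝕜 b p w)
          (fderiv 𝕜 a p v, fderiv 𝕜 b p v) +
        fderiv 𝕜 φ (a p, b p) (fderiv 𝕜 (fderiv 𝕜 a) p w v, fderiv 𝕜 (fderiv 𝕜 b) p w v) := by
  have hΨ : ContDiffAt 𝕜 2 (fun q => (a q, b q)) p := ha.prodMk hb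
  have hev : (fun q => fderiv 𝕜 (fun q => φ (a q, b q)) q v) =ᶠ[𝓝 p]
      fun q => fderiv 𝕜 φ (a q, b q) (fderiv 𝕜 a q v, fderiv 𝕜 b q v) := by
    filter_upwards [hΨ.continuousAt.eventually hφ.eventually_differentiableAt,
      ha.eventually_differentiableAt, hb.eventually_differentiableAt] with q hφq haq hbq
    exact fderiv_comp_prodMk_apply hφq haq hbq v
  have hc : HasFDerivAt (fun q => fderiv 𝕜 φ (a q, b q))
      ((fderiv 𝕜 (fderiv 𝕜 φ) (a p, b p)).comp ((fderiv 𝕜 a p).prod (fderiv 𝕜 b p))) p :=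
    hφ.differentiableAt_fderiv.hasFDerivAt.comp p
      ((ha.differentiableAt (by simp)).hasFDerivAt.prodMk
        (hb.differentiableAt (by simp)).hasFDerivAt)
  have hu := (ha.differentiableAt_fderiv.hasFDerivAt.clm_apply (hasFDerivAt_const v p)).prodMk
    (hb.differentiableAt_fderiv.hasFDerivAt.clm_apply (hasFDerivAt_const v p))
  rw [← fderiv_fderiv_apply (f := fun q => φ (a q, b q)) (hφ.comp p hΨ).differentiableAt_fderiv,
    hev.fderiv_eq, (hc.clm_apply hu).fderiv]
  simp [add_comm]

end Calculus

section SprayEquation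

variable {E : Type*} [NormedAddCommGroup E] [NormedSpace ℝ E]

/-- Coordinate-free form of the linear system `G_{y^α y^β} (2 Z^β) = G_{x^γ y^α} y^γ - G_{x^α}`,
whose solution `Z` is the spray `𝔾` when `G = F²`. -/
def IsSprayVector (G : E × E → ℝ) (x y Z : E) : Prop :=
  ∀ u, fderiv ℝ (fderiv ℝ G) (x, y) (0, u) (0, (2 : ℝ) • Z) =
    fderiv ℝ (fderiv ℝ G) (x, y) (y, 0) (0, u) - fderiv ℝ G (x, y) (u, 0)

theorem IsSprayVector.comp_prodMap {X : Type*} [NormedAddCommGroup X] [NormedSpace ℝ X]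
    {K : E × E → ℝ} (R : X →L[ℝ] E) {x y Z : X} (hK : ContDiffAt ℝ 2 K (R x, R y))
    (hZ : IsSprayVector K (R x) (R y) (R Z)) :
    IsSprayVector (fun p => K (R.prodMap R p)) x y Z := by
  intro u
  have hK' : ContDiffAt ℝ 2 K (R.prodMap R (x, y)) := hK
  rw [fderiv_fderiv_comp_clm _ hK', fderiv_fderiv_comp_clm _ hK',
    fderiv_comp_clm_apply _ (hK'.differentiableAt (by simp))]
  simpa using hZ (R u)

theorem IsSprayVector.comp_prodMk {φ : ℝ × ℝ → ℝ} {a b : E × E → ℝ} {x y Z : E}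
    (hφ : ContDiffAt ℝ 2 φ (a (x, y), b (x, y))) (ha : ContDiffAt ℝ 2 a (x, y))
    (hb : ContDiffAt ℝ 2 b (x, y)) (haZ : IsSprayVector a x y Z) (hbZ : IsSprayVector b x y Z)
    (ha₀ : fderiv ℝ a (x, y) (y, -((2 : ℝ) • Z)) = 0)
    (hb₀ : fderiv ℝ b (x, y) (y, -((2 : ℝ) • Z)) = 0) :
    IsSprayVector (fun p => φ (a p, b p)) x y Z := by
  have vertical_eq {c : E × E → ℝ} (hc : fderiv ℝ c (x, y) (y, -((2 : ℝ) • Z)) = 0) :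
      fderiv ℝ c (x, y) (0, (2 : ℝ) • Z) = fderiv ℝ c (x, y) (y, 0) := by
    rw [show ((y, -((2 : ℝ) • Z)) : E × E) = (y, 0) - (0, (2 : ℝ) • Z) by simp, map_sub,
      sub_eq_zero] at hc
    exact hc.symm
  intro u
  rw [fderiv_fderiv_comp_prodMk hφ ha hb, fderiv_fderiv_comp_prodMk hφ ha hb, haZ u, hbZ u,
    vertical_eq ha₀, vertical_eq hb₀, hφ.isSymmSndFDerivAt (by simp),
    fderiv_comp_prodMk_apply (hφ.differentiableAt (by simp)) (ha.differentiableAt (by simp))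
      (hb.differentiableAt (by simp)), ← Prod.mk_sub_mk, map_sub]
  ring

end SprayEquation

section PartialDerivatives

variable {ι : Type*} [Fintype ι] [DecidableEq ι] {g : (ι → ℝ) → (ι → ℝ) → ℝ} {x y : ι → ℝ}

theorem ContinuousLinearMap.apply_eq_sum_apply_single_mul (L : (ι → ℝ) →L[ℝ] ℝ) (v : ι → ℝ) :
    L v = ∑ β, L (Pi.single β 1) * v β := by
  conv_lhs => rw [pi_eq_sum_univ' v]
  simp [mul_comm]

theorem pdy_eq_fderiv (h : DifferentiableAt ℝ (uncurry g) (x, y)) (α : ι) :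
    pdy g α x y = fderiv ℝ (uncurry g) (x, y) (0, Pi.single α 1) :=
  DFunLike.congr_fun (h.hasFDerivAt.comp y (hasFDerivAt_prodMk_right x y)).fderiv _

theorem pdx_eq_fderiv (h : DifferentiableAt ℝ (uncurry g) (x, y)) (γ : ι) :
    pdx g γ x y = fderiv ℝ (uncurry g) (x, y) (Pi.single γ 1, 0) :=
  DFunLike.congr_fun (h.hasFDerivAt.comp x (hasFDerivAt_prodMk_left (𝕜 := ℝ) x y)).fderiv _

theorem uncurry_pdy_eventuallyEq (h : ContDiffAt ℝ 2 (uncurry g) (x, y)) (β : ι) :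
    uncurry (pdy g β) =ᶠ[𝓝 (x, y)] fun p => fderiv ℝ (uncurry g) p (0, Pi.single β 1) :=
  h.eventually_differentiableAt.mono fun _ hp => pdy_eq_fderiv hp β

theorem pdy_pdy_eq_fderiv_fderiv (h : ContDiffAt ℝ 2 (uncurry g) (x, y)) (α β : ι) :
    pdy (pdy g β) α x y =
      fderiv ℝ (fderiv ℝ (uncurry g)) (x, y) (0, Pi.single α 1) (0, Pi.single β 1) := by
  have hev := uncurry_pdy_eventuallyEq h β
  have hd := h.differentiableAt_fderiv.clm_apply (differentiableAt_const (0, Pi.single β 1))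
  rw [pdy_eq_fderiv (hev.differentiableAt_iff.mpr hd), hev.fderiv_eq,
    fderiv_fderiv_apply h.differentiableAt_fderiv]

theorem pdx_pdy_eq_fderiv_fderiv (h : ContDiffAt ℝ 2 (uncurry g) (x, y)) (γ β : ι) :
    pdx (pdy g β) γ x y =
      fderiv ℝ (fderiv ℝ (uncurry g)) (x, y) (Pi.single γ 1, 0) (0, Pi.single β 1) := by
  have hev := uncurry_pdy_eventuallyEq h β
  have hd := h.differentiableAt_fderiv.clm_apply (differentiableAt_const (0, Pi.single β 1))
  rw [pdx_eq_fderiv (hev.differentiableAt_iff.mpr hd), hev.fderiv_eq,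
    fderiv_fderiv_apply h.differentiableAt_fderiv]

end PartialDerivatives

noncomputable def energy {ι : Type*} (F : (ι → ℝ) → (ι → ℝ) → ℝ) : (ι → ℝ) × (ι → ℝ) → ℝ :=
  uncurry fun a b => F a b ^ 2

section SprayOfFinsler

variable {ι : Type*} [Fintype ι] [DecidableEq ι] {U : Set (ι → ℝ)} {F : (ι → ℝ) → (ι → ℝ) → ℝ}
  {x y : ι → ℝ}

theorem isSprayVector_energy_iff (hG : ContDiffAt ℝ 2 (energy F) (x, y)) (Z : ι → ℝ) :
    IsSprayVector (energy F) x y Z ↔ fundTensor F x y *ᵥ ((2 : ℝ) • Z) = fun β =>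
      (∑ γ, pdx (pdy (fun x' y' => F x' y' ^ 2) β) γ x y * y γ) -
        pdx (fun x' y' => F x' y' ^ 2) β x y := by
  set D2 := fderiv ℝ (fderiv ℝ (energy F)) (x, y)
  have hyy : ∀ α β, fundTensor F x y α β = D2 (0, Pi.single α 1) (0, Pi.single β 1) :=
    pdy_pdy_eq_fderiv_fderiv hG
  have hxy : ∀ γ β, pdx (pdy (fun x' y' => F x' y' ^ 2) β) γ x y =
      D2 (Pi.single γ 1, 0) (0, Pi.single β 1) :=
    pdx_pdy_eq_fderiv_fderiv hG
  have hx : ∀ β, pdx (fun x' y' => F x' y' ^ 2) β x y =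
      fderiv ℝ (energy F) (x, y) (Pi.single β 1, 0) :=
    pdx_eq_fderiv (hG.differentiableAt (by simp))
  have hmulVec : ∀ α v, (fundTensor F x y *ᵥ v) α = D2 (0, Pi.single α 1) (0, v) := by
    intro α v
    have := ((D2 (0, Pi.single α 1)).comp (.inr ℝ _ _)).apply_eq_sum_apply_single_mul v
    simp only [ContinuousLinearMap.comp_apply, ContinuousLinearMap.inr_apply] at this
    simp [this, Matrix.mulVec, dotProduct, hyy]
  have hrhs : ∀ β, ∑ γ, pdx (pdy (fun x' y' => F x' y' ^ 2) β) γ x y * y γ =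
      D2 (y, 0) (0, Pi.single β 1) := by
    intro β
    have := ((D2.flip (0, Pi.single β 1)).comp (.inl ℝ _ _)).apply_eq_sum_apply_single_mul y
    simp only [ContinuousLinearMap.comp_apply, ContinuousLinearMap.inl_apply,
      ContinuousLinearMap.flip_apply] at this
    simp [this, hxy]
  simp only [funext_iff, hmulVec, hrhs, hx]
  refine ⟨fun h α => h _, fun h u => ?_⟩
  -- both sides of the spray equation are linear in `u`
  change D2 (0, u) (0, (2 : ℝ) • Z) = D2 (y, 0) (0, u) - fderiv ℝ (energy F) (x, y) (u, 0)
  have hL := ((D2.flip (0, (2 : ℝ) • Z)).comp (.inr ℝ _ _)).apply_eq_sum_apply_single_mul u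
  have hR₁ := ((D2 (y, 0)).comp (.inr ℝ _ _)).apply_eq_sum_apply_single_mul u
  have hR₂ := ((fderiv ℝ (energy F) (x, y)).comp (.inl ℝ _ _)).apply_eq_sum_apply_single_mul u
  simp only [ContinuousLinearMap.comp_apply, ContinuousLinearMap.inl_apply,
    ContinuousLinearMap.inr_apply, ContinuousLinearMap.flip_apply] at hL hR₁ hR₂
  rw [hL, hR₁, hR₂, ← Finset.sum_sub_distrib]
  exact Finset.sum_congr rfl fun β _ => by rw [h β, sub_mul]

namespace IsFinslerMetric

theorem prod_mem_nhds (hF : IsFinslerMetric U F) (hx : x ∈ U) (hy : y ≠ 0) :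
    U ×ˢ {y | y ≠ 0} ∈ 𝓝 (x, y) :=
  (hF.isOpen.prod isOpen_ne).mem_nhds ⟨hx, hy⟩

theorem contDiffAt_energy (hF : IsFinslerMetric U F) (hx : x ∈ U) (hy : y ≠ 0) :
    ContDiffAt ℝ 2 (energy F) (x, y) :=
  (hF.smooth.contDiffAt (hF.prod_mem_nhds hx hy)).of_le (WithTop.coe_le_coe.mpr le_top)

theorem spray_eq_iff (hF : IsFinslerMetric U F) (hx : x ∈ U) (hy : y ≠ 0) (Z : ι → ℝ) :
    (fun α => spray F α x y) = Z ↔ IsSprayVector (energy F) x y Z := by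
  have hM := (Matrix.isUnit_iff_isUnit_det _).mp (hF.posDef x hx y hy).isUnit
  rw [isSprayVector_energy_iff (hF.contDiffAt_energy hx hy)]
  set V : ι → ℝ := fun β => (∑ γ, pdx (pdy (fun x' y' => F x' y' ^ 2) β) γ x y * y γ) -
    pdx (fun x' y' => F x' y' ^ 2) β x y
  have hspray : (fun α => spray F α x y) = (1 / 2 : ℝ) • ((fundTensor F x y)⁻¹ *ᵥ V) := by
    funext α
    simp [spray, V, Matrix.mulVec, dotProduct]
  rw [hspray]
  constructor
  · rintro rfl
    simp [smul_smul, Matrix.mulVec_mulVec, Matrix.mul_nonsing_inv _ hM]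
  · intro h
    simp [← h, smul_smul, Matrix.mulVec_mulVec, Matrix.nonsing_inv_mul _ hM]

/-- Euler's relation for the 2-homogeneous energy. -/
theorem fderiv_energy_apply_vertical (hF : IsFinslerMetric U F) (hx : x ∈ U) (hy : y ≠ 0) :
    fderiv ℝ (energy F) (x, y) (0, y) = 2 * energy F (x, y) := by
  have hcurve : HasDerivAt (fun c : ℝ => ((x, c • y) : (ι → ℝ) × (ι → ℝ))) (0, y) 1 := by
    simpa using (hasDerivAt_const (1 : ℝ) x).prodMk ((hasDerivAt_id (1 : ℝ)).smul_const y)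
  have hG : DifferentiableAt ℝ (energy F) (x, (1 : ℝ) • y) := by
    simpa using (hF.contDiffAt_energy hx hy).differentiableAt (by simp)
  have hhom : (fun c : ℝ => energy F (x, c • y)) = fun c => c ^ 2 * energy F (x, y) := by
    funext c
    simp [energy, hF.homog x hx, mul_pow]
  have h₂ : HasDerivAt (fun c : ℝ => energy F (x, c • y)) (2 * energy F (x, y)) 1 := by
    simpa [hhom] using (hasDerivAt_pow 2 (1 : ℝ)).mul_const (energy F (x, y))
  simpa using (hG.hasFDerivAt.comp_hasDerivAt 1 hcurve).unique h₂

theorem fderiv_fderiv_energy_apply_vertical (hF : IsFinslerMetric U F) (hx : x ∈ U) (hy : y ≠ 0)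
    (w : (ι → ℝ) × (ι → ℝ)) :
    fderiv ℝ (fderiv ℝ (energy F)) (x, y) w (0, y) =
      2 * fderiv ℝ (energy F) (x, y) w - fderiv ℝ (energy F) (x, y) (0, w.2) := by
  have hG := hF.contDiffAt_energy hx hy
  let vertical := (ContinuousLinearMap.inr ℝ (ι → ℝ) (ι → ℝ)).comp
    (ContinuousLinearMap.snd ℝ (ι → ℝ) (ι → ℝ))
  have hEuler : (fun p => fderiv ℝ (energy F) p (vertical p)) =ᶠ[𝓝 (x, y)] 2 * energy F := by
    filter_upwards [hF.prod_mem_nhds hx hy] with p hp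
    exact hF.fderiv_energy_apply_vertical hp.1 hp.2
  have h₁ := hG.differentiableAt_fderiv.hasFDerivAt.clm_apply vertical.hasFDerivAt
  have h₂ := ((hG.differentiableAt (by simp)).hasFDerivAt.const_mul 2).congr_of_eventuallyEq
    hEuler
  have := DFunLike.congr_fun (h₁.unique h₂) w
  simp [vertical] at this
  linarith

/-- The energy is constant along the spray field `y ∂ₓ - 2Z ∂_y`. -/
theorem fderiv_energy_along_spray (hF : IsFinslerMetric U F) (hx : x ∈ U) (hy : y ≠ 0)
    {Z : ι → ℝ} (hZ : IsSprayVector (energy F) x y Z) :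
    fderiv ℝ (energy F) (x, y) (y, -((2 : ℝ) • Z)) = 0 := by
  have hsymm := (hF.contDiffAt_energy hx hy).isSymmSndFDerivAt (by simp)
  have hZy := hZ y
  have hvert := hF.fderiv_fderiv_energy_apply_vertical hx hy (0, (2 : ℝ) • Z)
  have hhor := hF.fderiv_fderiv_energy_apply_vertical hx hy (y, 0)
  rw [hsymm] at hvert
  dsimp only at hvert
  simp only [Prod.mk_zero_zero, map_zero] at hhor
  rw [show ((y, -((2 : ℝ) • Z)) : (ι → ℝ) × (ι → ℝ)) = (y, 0) - (0, (2 : ℝ) • Z) by simp, map_sub]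
  linarith

end IsFinslerMetric

end SprayOfFinsler

section Restriction

variable {ι κ : Type*} [Fintype ι] [DecidableEq ι] [Fintype κ]

theorem eqOn_pdy_of_eqOn_comp {R : (ι → ℝ) →L[ℝ] (κ → ℝ)} {S : (κ → ℝ) →L[ℝ] (ι → ℝ)}
    (hRS : RightInverse S R) {Φ : (ι → ℝ) → (ι → ℝ) → ℝ} {h : (κ → ℝ) → ℝ}
    {O : Set (ι → ℝ)} (hO : IsOpen O) {x : ι → ℝ} (hΦ : EqOn (Φ x) (fun y => h (R y)) O)
    (β : ι) : EqOn (pdy Φ β x) (fun y => fderiv ℝ h (R y) (R (Pi.single β 1))) O := by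
  intro y hy
  simp only [pdy, (hΦ.eventuallyEq_of_mem (hO.mem_nhds hy)).fderiv_eq,
    fderiv_comp_clm_of_rightInverse hRS, ContinuousLinearMap.comp_apply]

theorem berwaldConn_eq_of_spray_eqOn [DecidableEq κ] {R : (ι → ℝ) →L[ℝ] (κ → ℝ)}
    {S : (κ → ℝ) →L[ℝ] (ι → ℝ)} (hRS : RightInverse S R) {F : (ι → ℝ) → (ι → ℝ) → ℝ}
    {F' : (κ → ℝ) → (κ → ℝ) → ℝ} {O : Set (ι → ℝ)} (hO : IsOpen O) {x : ι → ℝ}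
    {x' : κ → ℝ} {α : ι} {α' : κ} (hspray : EqOn (spray F α x) (fun y => spray F' α' x' (R y)) O)
    {y : ι → ℝ} (hy : y ∈ O) (β γ : ι) :
    berwaldConn F α β γ x y = fderiv ℝ (fun z => fderiv ℝ (spray F' α' x') z (R (Pi.single γ 1)))
      (R y) (R (Pi.single β 1)) :=
  eqOn_pdy_of_eqOn_comp hRS hO (eqOn_pdy_of_eqOn_comp hRS hO hspray γ) β hy

end Restriction

section SumRestriction

variable (ι₁ ι₂ : Type*)

noncomputable def restrictInl : ((ι₁ ⊕ ι₂) → ℝ) →L[ℝ] (ι₁ → ℝ) :=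
  ContinuousLinearMap.pi fun i => ContinuousLinearMap.proj (Sum.inl i)

noncomputable def restrictInr : ((ι₁ ⊕ ι₂) → ℝ) →L[ℝ] (ι₂ → ℝ) :=
  ContinuousLinearMap.pi fun i => ContinuousLinearMap.proj (Sum.inr i)

variable {ι₁ ι₂}

@[simp]
theorem restrictInl_apply (y : ι₁ ⊕ ι₂ → ℝ) : restrictInl ι₁ ι₂ y = y ∘ Sum.inl := rfl

@[simp]
theorem restrictInr_apply (y : ι₁ ⊕ ι₂ → ℝ) : restrictInr ι₁ ι₂ y = y ∘ Sum.inr := rfl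

theorem restrictInl_rightInverse :
    RightInverse (ContinuousLinearMap.pi (Sum.elim (ContinuousLinearMap.proj (R := ℝ)
      (φ := fun _ => ℝ)) 0)) (restrictInl ι₁ ι₂) :=
  fun _ => rfl

theorem restrictInr_rightInverse :
    RightInverse (ContinuousLinearMap.pi (Sum.elim 0 (ContinuousLinearMap.proj (R := ℝ)
      (φ := fun _ => ℝ)))) (restrictInr ι₁ ι₂) :=
  fun _ => rfl

variable [DecidableEq ι₁] [DecidableEq ι₂]

@[simp]
theorem single_inl_comp_inl (i : ι₁) :
    (Pi.single (Sum.inl i) 1 : ι₁ ⊕ ι₂ → ℝ) ∘ Sum.inl = Pi.single i 1 := by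
  ext; simp [Pi.single_apply]

@[simp]
theorem single_inr_comp_inl (i : ι₂) :
    (Pi.single (Sum.inr i) 1 : ι₁ ⊕ ι₂ → ℝ) ∘ Sum.inl = 0 := by
  ext; simp

@[simp]
theorem single_inl_comp_inr (i : ι₁) :
    (Pi.single (Sum.inl i) 1 : ι₁ ⊕ ι₂ → ℝ) ∘ Sum.inr = 0 := by
  ext; simp

@[simp]
theorem single_inr_comp_inr (i : ι₂) :
    (Pi.single (Sum.inr i) 1 : ι₁ ⊕ ι₂ → ℝ) ∘ Sum.inr = Pi.single i 1 := by
  ext; simp [Pi.single_apply]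

end SumRestriction

namespace IsMinkowskianProduct

variable {m n : ℕ} {U₁ : Set (Fin m → ℝ)} {U₂ : Set (Fin n → ℝ)}
  {F₁ : (Fin m → ℝ) → (Fin m → ℝ) → ℝ} {F₂ : (Fin n → ℝ) → (Fin n → ℝ) → ℝ} {f : ℝ → ℝ → ℝ}
  {F : (Fin m ⊕ Fin n → ℝ) → (Fin m ⊕ Fin n → ℝ) → ℝ} {x y : Fin m ⊕ Fin n → ℝ}

theorem energy_eq (hprod : IsMinkowskianProduct U₁ U₂ F₁ F₂ f F) :
    energy F = fun p => uncurry f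
      (energy F₁ ((restrictInl _ _).prodMap (restrictInl _ _) p),
        energy F₂ ((restrictInr _ _).prodMap (restrictInr _ _) p)) := by
  funext p
  change F p.1 p.2 ^ 2 =
    f (F₁ (p.1 ∘ Sum.inl) (p.2 ∘ Sum.inl) ^ 2) (F₂ (p.1 ∘ Sum.inr) (p.2 ∘ Sum.inr) ^ 2)
  rw [hprod.F_def, Real.sq_sqrt (hprod.f_nonneg _ (mem_Ici.mpr (sq_nonneg _)) _
    (mem_Ici.mpr (sq_nonneg _)))]

theorem spray_eq (hprod : IsMinkowskianProduct U₁ U₂ F₁ F₂ f F)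
    (hx₁ : x ∘ Sum.inl ∈ U₁) (hx₂ : x ∘ Sum.inr ∈ U₂) (hy₁ : y ∘ Sum.inl ≠ 0)
    (hy₂ : y ∘ Sum.inr ≠ 0) :
    (fun α => spray F α x y) = Sum.elim (fun i => spray F₁ i (x ∘ Sum.inl) (y ∘ Sum.inl))
      (fun i => spray F₂ i (x ∘ Sum.inr) (y ∘ Sum.inr)) := by
  set Z : Fin m ⊕ Fin n → ℝ := Sum.elim (fun i => spray F₁ i (x ∘ Sum.inl) (y ∘ Sum.inl))
    (fun i => spray F₂ i (x ∘ Sum.inr) (y ∘ Sum.inr))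
  set R₁ := restrictInl (Fin m) (Fin n)
  set R₂ := restrictInr (Fin m) (Fin n)
  have hy : y ≠ 0 := fun h => hy₁ (by simp [h])
  have hK : ContDiffAt ℝ 2 (energy F₁) (R₁ x, R₁ y) := hprod.finsler₁.contDiffAt_energy hx₁ hy₁
  have hH : ContDiffAt ℝ 2 (energy F₂) (R₂ x, R₂ y) := hprod.finsler₂.contDiffAt_energy hx₂ hy₂
  have hZ₁ : IsSprayVector (energy F₁) (R₁ x) (R₁ y) (R₁ Z) :=
    (hprod.finsler₁.spray_eq_iff hx₁ hy₁ _).mp rfl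
  have hZ₂ : IsSprayVector (energy F₂) (R₂ x) (R₂ y) (R₂ Z) :=
    (hprod.finsler₂.spray_eq_iff hx₂ hy₂ _).mp rfl
  have hpos : (energy F₁ (R₁ x, R₁ y), energy F₂ (R₂ x, R₂ y)) ∈ Ioi (0 : ℝ) ×ˢ Ioi (0 : ℝ) :=
    ⟨pow_pos (hprod.finsler₁.pos _ hx₁ _ hy₁) 2, pow_pos (hprod.finsler₂.pos _ hx₂ _ hy₂) 2⟩
  have hf : ContDiffAt ℝ 2 (uncurry f) (energy F₁ (R₁ x, R₁ y), energy F₂ (R₂ x, R₂ y)) :=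
    (hprod.f_smooth.contDiffAt ((isOpen_Ioi.prod isOpen_Ioi).mem_nhds hpos)).of_le
      (WithTop.coe_le_coe.mpr le_top)
  have hKR : ContDiffAt ℝ 2 (fun p => energy F₁ (R₁.prodMap R₁ p)) (x, y) :=
    hK.comp (x, y) (R₁.prodMap R₁).contDiff.contDiffAt
  have hHR : ContDiffAt ℝ 2 (fun p => energy F₂ (R₂.prodMap R₂ p)) (x, y) :=
    hH.comp (x, y) (R₂.prodMap R₂).contDiff.contDiffAt
  have hK₀ : fderiv ℝ (fun p => energy F₁ (R₁.prodMap R₁ p)) (x, y) (y, -((2 : ℝ) • Z)) = 0 := by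
    rw [fderiv_comp_clm_apply _ (hK.differentiableAt (by simp))]
    simp only [ContinuousLinearMap.coe_prodMap', Prod.map_apply, map_neg, map_smul]
    exact hprod.finsler₁.fderiv_energy_along_spray hx₁ hy₁ hZ₁
  have hH₀ : fderiv ℝ (fun p => energy F₂ (R₂.prodMap R₂ p)) (x, y) (y, -((2 : ℝ) • Z)) = 0 := by
    rw [fderiv_comp_clm_apply _ (hH.differentiableAt (by simp))]
    simp only [ContinuousLinearMap.coe_prodMap', Prod.map_apply, map_neg, map_smul]
    exact hprod.finsler₂.fderiv_energy_along_spray hx₂ hy₂ hZ₂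
  rw [hprod.finsler.spray_eq_iff ⟨hx₁, hx₂⟩ hy, hprod.energy_eq]
  exact IsSprayVector.comp_prodMk hf hKR hHR (hZ₁.comp_prodMap R₁ hK) (hZ₂.comp_prodMap R₂ hH)
    hK₀ hH₀

end IsMinkowskianProduct

/-- The Berwald connection coefficients of a Minkowskian product Finsler metric
split: `Γ̌^i_{j;l} = Γ̌₁^i_{j;l}`, `Γ̌^{i'}_{j';l'} = Γ̌₂^{i'}_{j';l'}`, and all
mixed coefficients vanish. -/
theorem berwaldConn_of_minkowskian_product {m n : ℕ}
    (U₁ : Set (Fin m → ℝ)) (U₂ : Set (Fin n → ℝ))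
    (F₁ : (Fin m → ℝ) → (Fin m → ℝ) → ℝ) (F₂ : (Fin n → ℝ) → (Fin n → ℝ) → ℝ)
    (f : ℝ → ℝ → ℝ) (F : (Fin m ⊕ Fin n → ℝ) → (Fin m ⊕ Fin n → ℝ) → ℝ)
    (hprod : IsMinkowskianProduct U₁ U₂ F₁ F₂ f F) :
    ∀ x : Fin m ⊕ Fin n → ℝ, (x ∘ Sum.inl) ∈ U₁ → (x ∘ Sum.inr) ∈ U₂ →
    ∀ y : Fin m ⊕ Fin n → ℝ, (y ∘ Sum.inl) ≠ 0 → (y ∘ Sum.inr) ≠ 0 →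
      (∀ i j l : Fin m,
        berwaldConn F (Sum.inl i) (Sum.inl j) (Sum.inl l) x y =
          berwaldConn F₁ i j l (x ∘ Sum.inl) (y ∘ Sum.inl)) ∧
      (∀ i' j' l' : Fin n,
        berwaldConn F (Sum.inr i') (Sum.inr j') (Sum.inr l') x y =
          berwaldConn F₂ i' j' l' (x ∘ Sum.inr) (y ∘ Sum.inr)) ∧
      (∀ (i : Fin m) (j' : Fin n) (l : Fin m),
        berwaldConn F (Sum.inl i) (Sum.inr j') (Sum.inl l) x y = 0) ∧
      (∀ (i : Fin m) (j : Fin m) (l' : Fin n),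
        berwaldConn F (Sum.inl i) (Sum.inl j) (Sum.inr l') x y = 0) ∧
      (∀ (i : Fin m) (j' : Fin n) (l' : Fin n),
        berwaldConn F (Sum.inl i) (Sum.inr j') (Sum.inr l') x y = 0) ∧
      (∀ (i' : Fin n) (j' : Fin n) (l : Fin m),
        berwaldConn F (Sum.inr i') (Sum.inr j') (Sum.inl l) x y = 0) ∧
      (∀ (i' : Fin n) (j : Fin m) (l' : Fin n),
        berwaldConn F (Sum.inr i') (Sum.inl j) (Sum.inr l') x y = 0) ∧
      (∀ (i' : Fin n) (j : Fin m) (l : Fin m),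
        berwaldConn F (Sum.inr i') (Sum.inl j) (Sum.inl l) x y = 0) := by
  intro x hx₁ hx₂ y hy₁ hy₂
  have hO : IsOpen {y : Fin m ⊕ Fin n → ℝ | y ∘ Sum.inl ≠ 0 ∧ y ∘ Sum.inr ≠ 0} :=
    (isOpen_ne.preimage (restrictInl _ _).continuous).inter
      (isOpen_ne.preimage (restrictInr _ _).continuous)
  have hinl (i : Fin m) := berwaldConn_eq_of_spray_eqOn restrictInl_rightInverse hO
    (fun y' hy' => congrFun (hprod.spray_eq hx₁ hx₂ hy'.1 hy'.2) (Sum.inl i)) ⟨hy₁, hy₂⟩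
  have hinr (i : Fin n) := berwaldConn_eq_of_spray_eqOn restrictInr_rightInverse hO
    (fun y' hy' => congrFun (hprod.spray_eq hx₁ hx₂ hy'.1 hy'.2) (Sum.inr i)) ⟨hy₁, hy₂⟩
  refine ⟨fun i j l => ?_, fun i j l => ?_, fun i j l => ?_, fun i j l => ?_, fun i j l => ?_,
    fun i j l => ?_, fun i j l => ?_, fun i j l => ?_⟩
  all_goals simp [hinl, hinr]
  exacts [rfl, rfl]
end

section
/- Let F be the Minkowskian product of Finsler metrics F₁ and F₂ with respect to a product function f. Then at every point (x,y) = ((x₁,x₂),(y₁,y₂)) with y₁ ≠ 0 and y₂ ≠ 0, the Berwald curvature B^α_{βγη} = ∂³𝔾^α/∂y^β∂y^γ∂y^η of F satisfies: B^i_{jlh}(x,y) = B₁^i_{jlh}(x₁,y₁) and B^{i'}_{j'l'h'}(x,y) = B₂^{i'}_{j'l'h'}(x₂,y₂) on the pure blocks, and every component with mixed block indices vanishes (in particular B^i_{βγη} = 0 whenever at least one of β,γ,η lies in the second block, and B^{i'}_{βγη} = 0 whenever at least one of β,γ,η lies in the first block). -/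
open Matrix

/-!
The geodesic spray is characterized by the Euler–Lagrange equations of `G = F²`: `w = 2𝔾(x, y)`
is the only vector such that, along `(y, -w)`, the derivative of `G` vanishes and the derivative of
each `∂G/∂y^β` equals `∂G/∂x^β` (uniqueness because the fundamental tensor is invertible; the first
condition follows from the second by Euler's relation for the 2-homogeneous `G`). These conditions
are inherited by `K = F₁²` and `H = F₂²` viewed on the product, and pass to `f(K, H)` by the chain
rule, because every function of `(K, H)` is stationary along a vector annihilating `K` and `H`.
Hence `(2𝔾₁, 2𝔾₂)` solves the Euler–Lagrange equations of `F²`, so on the open set where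
`y₁ ≠ 0 ≠ y₂` the spray of `F` is `𝔾₁` read on the first block and `𝔾₂` on the second. Its third
fiber derivatives are then those of `𝔾₁` or `𝔾₂`, or vanish as soon as one of them is taken in a
direction of the other block.
-/

open Function Set
open scoped ContDiff

section Calculus

variable {E F G : Type*} [NormedAddCommGroup E] [NormedSpace ℝ E] [NormedAddCommGroup F]
  [NormedSpace ℝ F] [NormedAddCommGroup G] [NormedSpace ℝ G]

/-- If `g ∘ L` is differentiable then so is `g`, being `g ∘ L` composed with an affine section
of `L`; hence the chain rule for `g ∘ L` needs no differentiability assumption. -/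
theorem fderiv_comp_of_rightInverse {L : E →L[ℝ] F} {S : F →L[ℝ] E} (hLS : RightInverse S L)
    (g : F → G) (x : E) : fderiv ℝ (g ∘ L) x = (fderiv ℝ g (L x)).comp L := by
  by_cases hg : DifferentiableAt ℝ g (L x)
  · rw [fderiv_comp x hg L.differentiableAt, L.fderiv]
  have hgL : ¬ DifferentiableAt ℝ (g ∘ L) x := by
    intro h
    have hsec : DifferentiableAt ℝ (fun z => x + S (z - L x)) (L x) := by fun_prop
    have h' : DifferentiableAt ℝ (g ∘ L) ((fun z => x + S (z - L x)) (L x)) := by simpa using h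
    refine hg ((h'.comp (L x) hsec).congr_of_eventuallyEq (Filter.Eventually.of_forall fun z => ?_))
    simp [hLS _]
  rw [fderiv_zero_of_not_differentiableAt hg, fderiv_zero_of_not_differentiableAt hgL,
    ContinuousLinearMap.zero_comp]

theorem fderiv_apply_self_of_homogeneous {g : E → ℝ} {y : E} (hg : DifferentiableAt ℝ g y)
    (hhom : ∀ c : ℝ, g (c • y) = c ^ 2 * g y) : fderiv ℝ g y y = 2 * g y := by
  have hray : HasDerivAt (fun c : ℝ => c • y) y 1 := by
    simpa using (hasDerivAt_id (1 : ℝ)).smul_const y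
  have hg' : HasFDerivAt g (fderiv ℝ g y) ((fun c : ℝ => c • y) 1) := by
    simpa using hg.hasFDerivAt
  have hpow : HasDerivAt (fun c : ℝ => g (c • y)) (2 * g y) 1 := by
    simp_rw [hhom]
    simpa using (hasDerivAt_pow 2 (1 : ℝ)).mul_const (g y)
  exact (hg'.comp_hasDerivAt (1 : ℝ) hray).unique hpow

end Calculus

section Coordinates

variable {ι : Type*} [Fintype ι] [DecidableEq ι] {g : (ι → ℝ) → (ι → ℝ) → ℝ} {x y : ι → ℝ}

theorem ContinuousLinearMap.sum_apply_single_mul (L : (ι → ℝ) →L[ℝ] ℝ) (v : ι → ℝ) :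
    ∑ α, L (Pi.single α 1) * v α = L v := by
  conv_rhs => rw [← Finset.univ_sum_single v, map_sum]
  refine Finset.sum_congr rfl fun α _ => ?_
  have : Pi.single α (v α) = v α • (Pi.single α 1 : ι → ℝ) := by ext; simp [Pi.single_apply]
  rw [this, map_smul, smul_eq_mul, mul_comm]

theorem pdy_eq_fderiv_uncurry (hg : DifferentiableAt ℝ (uncurry g) (x, y)) (α : ι) :
    pdy g α x y = fderiv ℝ (uncurry g) (x, y) (0, Pi.single α 1) := by
  have : HasFDerivAt (g x) ((fderiv ℝ (uncurry g) (x, y)).comp (.inr ℝ _ _)) y :=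
    hg.hasFDerivAt.comp y (hasFDerivAt_prodMk_right (𝕜 := ℝ) x y)
  simp [pdy, this.fderiv]

theorem pdx_eq_fderiv_uncurry (hg : DifferentiableAt ℝ (uncurry g) (x, y)) (γ : ι) :
    pdx g γ x y = fderiv ℝ (uncurry g) (x, y) (Pi.single γ 1, 0) := by
  have hxy : HasFDerivAt (uncurry g) (fderiv ℝ (uncurry g) (x, y)) (x, y) := hg.hasFDerivAt
  have := hxy.comp x (hasFDerivAt_prodMk_left (𝕜 := ℝ) x y)
  have h : fderiv ℝ (fun x' => g x' y) x = _ := this.fderiv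
  simp [pdx, h]

theorem fderiv_uncurry_apply_eq_sum (hg : DifferentiableAt ℝ (uncurry g) (x, y)) (u v : ι → ℝ) :
    fderiv ℝ (uncurry g) (x, y) (u, v) = ∑ γ, pdx g γ x y * u γ + ∑ α, pdy g α x y * v α := by
  simp only [pdx_eq_fderiv_uncurry hg, pdy_eq_fderiv_uncurry hg]
  have hu := ((fderiv ℝ (uncurry g) (x, y)).comp (.inl ℝ _ (ι → ℝ))).sum_apply_single_mul u
  have hv := ((fderiv ℝ (uncurry g) (x, y)).comp (.inr ℝ (ι → ℝ) _)).sum_apply_single_mul v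
  simp only [ContinuousLinearMap.comp_apply, ContinuousLinearMap.inl_apply,
    ContinuousLinearMap.inr_apply] at hu hv
  rw [hu, hv, ← map_add, Prod.mk_add_mk, add_zero, zero_add]

variable {s : Set ((ι → ℝ) × (ι → ℝ))}

theorem ContDiffOn.uncurry_pdy (hs : IsOpen s) (hg : ContDiffOn ℝ ∞ (uncurry g) s) (α : ι) :
    ContDiffOn ℝ ∞ (uncurry (pdy g α)) s := by
  have hD := (hg.fderiv_of_isOpen (m := ∞) hs (by simp)).clm_apply
    (contDiffOn_const (c := ((0 : ι → ℝ), (Pi.single α 1 : ι → ℝ))))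
  refine hD.congr fun p hp => ?_
  exact pdy_eq_fderiv_uncurry ((hg.contDiffAt (hs.mem_nhds hp)).differentiableAt (by simp)) α

theorem Set.EqOn.pdy_congr {g₁ g₂ : (ι → ℝ) → (ι → ℝ) → ℝ} (h : EqOn (uncurry g₁) (uncurry g₂) s)
    (hs : IsOpen s) (α : ι) : EqOn (uncurry (pdy g₁ α)) (uncurry (pdy g₂ α)) s := by
  rintro ⟨x, y⟩ hp
  have hslice : g₁ x =ᶠ[nhds y] g₂ x :=
    Filter.eventually_of_mem ((hs.preimage (Continuous.prodMk_right x)).mem_nhds hp)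
      fun y' hy' => h hy'
  simp only [uncurry_apply_pair, _root_.pdy, hslice.fderiv_eq]

end Coordinates

section Composition

variable {f : ℝ → ℝ → ℝ} {a b : ℝ}

theorem pderivS_eq_fderiv_uncurry (hf : DifferentiableAt ℝ (uncurry f) (a, b)) :
    pderivS f a b = fderiv ℝ (uncurry f) (a, b) (1, 0) := by
  have hline : HasDerivAt (fun u : ℝ => (u, b)) (1, 0) a :=
    (hasDerivAt_id a).prodMk (hasDerivAt_const a b)
  exact (hf.hasFDerivAt.comp_hasDerivAt a hline).deriv

theorem pderivT_eq_fderiv_uncurry (hf : DifferentiableAt ℝ (uncurry f) (a, b)) :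
    pderivT f a b = fderiv ℝ (uncurry f) (a, b) (0, 1) := by
  have hline : HasDerivAt (fun v : ℝ => (a, v)) (0, 1) b :=
    (hasDerivAt_const b a).prodMk (hasDerivAt_id b)
  exact (hf.hasFDerivAt.comp_hasDerivAt b hline).deriv

theorem fderiv_uncurry_apply_eq (hf : DifferentiableAt ℝ (uncurry f) (a, b)) (u v : ℝ) :
    fderiv ℝ (uncurry f) (a, b) (u, v) = u * pderivS f a b + v * pderivT f a b := by
  have : ((u, v) : ℝ × ℝ) = u • ((1 : ℝ), (0 : ℝ)) + v • ((0 : ℝ), (1 : ℝ)) := by simp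
  rw [this, map_add, map_smul, map_smul, pderivS_eq_fderiv_uncurry hf,
    pderivT_eq_fderiv_uncurry hf, smul_eq_mul, smul_eq_mul]

variable {t : Set (ℝ × ℝ)}

theorem ContDiffOn.uncurry_pderivS (ht : IsOpen t) (hf : ContDiffOn ℝ ∞ (uncurry f) t) :
    ContDiffOn ℝ ∞ (uncurry (pderivS f)) t := by
  have hD := (hf.fderiv_of_isOpen (m := ∞) ht (by simp)).clm_apply
    (contDiffOn_const (c := ((1 : ℝ), (0 : ℝ))))
  refine hD.congr fun p hp => ?_
  exact pderivS_eq_fderiv_uncurry ((hf.contDiffAt (ht.mem_nhds hp)).differentiableAt (by simp))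

theorem ContDiffOn.uncurry_pderivT (ht : IsOpen t) (hf : ContDiffOn ℝ ∞ (uncurry f) t) :
    ContDiffOn ℝ ∞ (uncurry (pderivT f)) t := by
  have hD := (hf.fderiv_of_isOpen (m := ∞) ht (by simp)).clm_apply
    (contDiffOn_const (c := ((0 : ℝ), (1 : ℝ))))
  refine hD.congr fun p hp => ?_
  exact pderivT_eq_fderiv_uncurry ((hf.contDiffAt (ht.mem_nhds hp)).differentiableAt (by simp))

variable {ι : Type*} [Fintype ι] {K H : (ι → ℝ) → (ι → ℝ) → ℝ} {x y : ι → ℝ}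

theorem hasFDerivAt_uncurry_comp₂
    (hf : DifferentiableAt ℝ (uncurry f) (K x y, H x y))
    (hK : DifferentiableAt ℝ (uncurry K) (x, y)) (hH : DifferentiableAt ℝ (uncurry H) (x, y)) :
    HasFDerivAt (uncurry fun x y => f (K x y) (H x y))
      ((fderiv ℝ (uncurry f) (K x y, H x y)).comp
        ((fderiv ℝ (uncurry K) (x, y)).prod (fderiv ℝ (uncurry H) (x, y)))) (x, y) := by
  have hf' : HasFDerivAt (uncurry f) _ (uncurry K (x, y), uncurry H (x, y)) := hf.hasFDerivAt
  exact hf'.comp (x, y) (hK.hasFDerivAt.prodMk hH.hasFDerivAt)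

theorem fderiv_uncurry_comp₂_apply
    (hf : DifferentiableAt ℝ (uncurry f) (K x y, H x y))
    (hK : DifferentiableAt ℝ (uncurry K) (x, y)) (hH : DifferentiableAt ℝ (uncurry H) (x, y))
    (V : (ι → ℝ) × (ι → ℝ)) :
    fderiv ℝ (uncurry fun x y => f (K x y) (H x y)) (x, y) V =
      fderiv ℝ (uncurry K) (x, y) V * pderivS f (K x y) (H x y) +
        fderiv ℝ (uncurry H) (x, y) V * pderivT f (K x y) (H x y) := by
  rw [(hasFDerivAt_uncurry_comp₂ hf hK hH).fderiv]
  exact fderiv_uncurry_apply_eq hf _ _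

variable [DecidableEq ι]

theorem pdy_comp₂ (hf : DifferentiableAt ℝ (uncurry f) (K x y, H x y))
    (hK : DifferentiableAt ℝ (uncurry K) (x, y)) (hH : DifferentiableAt ℝ (uncurry H) (x, y))
    (β : ι) :
    pdy (fun x y => f (K x y) (H x y)) β x y =
      pdy K β x y * pderivS f (K x y) (H x y) + pdy H β x y * pderivT f (K x y) (H x y) := by
  rw [pdy_eq_fderiv_uncurry (hasFDerivAt_uncurry_comp₂ hf hK hH).differentiableAt,
    fderiv_uncurry_comp₂_apply hf hK hH, pdy_eq_fderiv_uncurry hK, pdy_eq_fderiv_uncurry hH]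

theorem pdx_comp₂ (hf : DifferentiableAt ℝ (uncurry f) (K x y, H x y))
    (hK : DifferentiableAt ℝ (uncurry K) (x, y)) (hH : DifferentiableAt ℝ (uncurry H) (x, y))
    (β : ι) :
    pdx (fun x y => f (K x y) (H x y)) β x y =
      pdx K β x y * pderivS f (K x y) (H x y) + pdx H β x y * pderivT f (K x y) (H x y) := by
  rw [pdx_eq_fderiv_uncurry (hasFDerivAt_uncurry_comp₂ hf hK hH).differentiableAt,
    fderiv_uncurry_comp₂_apply hf hK hH, pdx_eq_fderiv_uncurry hK, pdx_eq_fderiv_uncurry hH]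

end Composition

section Pullback

variable {ι κ : Type*} {e : κ → ι}

/-- The continuous version of `LinearMap.funLeft`. -/
def funLeftCLM (e : κ → ι) : (ι → ℝ) →L[ℝ] (κ → ℝ) :=
  ContinuousLinearMap.pi fun k => ContinuousLinearMap.proj (e k)

def pullback (e : κ → ι) (φ : (κ → ℝ) → (κ → ℝ) → ℝ) : (ι → ℝ) → (ι → ℝ) → ℝ :=
  fun x y => φ (x ∘ e) (y ∘ e)

theorem IsOpen.setOf_comp_mem {s : Set ((κ → ℝ) × (κ → ℝ))} (hs : IsOpen s) :
    IsOpen {p : (ι → ℝ) × (ι → ℝ) | (p.1 ∘ e, p.2 ∘ e) ∈ s} :=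
  hs.preimage ((funLeftCLM e).prodMap (funLeftCLM e)).continuous

theorem ContDiffOn.pullback [Fintype ι] [Fintype κ] {s : Set ((κ → ℝ) × (κ → ℝ))}
    {φ : (κ → ℝ) → (κ → ℝ) → ℝ} (hφ : ContDiffOn ℝ ∞ (uncurry φ) s) :
    ContDiffOn ℝ ∞ (uncurry (pullback e φ)) {p | (p.1 ∘ e, p.2 ∘ e) ∈ s} :=
  hφ.comp_continuousLinearMap ((funLeftCLM e).prodMap (funLeftCLM e))

theorem Pi.single_comp_of_notMem_range [DecidableEq ι] {β : ι} (hβ : β ∉ range e) :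
    (Pi.single β 1 : ι → ℝ) ∘ e = 0 := by
  ext k; simp [show e k ≠ β from fun h => hβ ⟨k, h⟩]

variable (he : Injective e)
include he

theorem Pi.single_comp_of_injective [DecidableEq ι] [DecidableEq κ] (j : κ) :
    (Pi.single (e j) 1 : ι → ℝ) ∘ e = Pi.single j 1 := by
  ext k; simp [Pi.single_apply, he.eq_iff]

variable [Fintype κ]

theorem funLeftCLM_rightInverse :
    RightInverse (Function.ExtendByZero.linearMap ℝ e).toContinuousLinearMap (funLeftCLM e) :=
  fun z => funext fun k => he.extend_apply z 0 k

variable [Fintype ι]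

theorem fderiv_comp_funLeft {G : Type*} [NormedAddCommGroup G] [NormedSpace ℝ G]
    (g : (κ → ℝ) → G) (z v : ι → ℝ) :
    fderiv ℝ (fun z => g (z ∘ e)) z v = fderiv ℝ g (z ∘ e) (v ∘ e) :=
  congrArg (· v) (fderiv_comp_of_rightInverse (funLeftCLM_rightInverse he) g z)

variable {φ : (κ → ℝ) → (κ → ℝ) → ℝ}

theorem fderiv_uncurry_pullback (x y : ι → ℝ) (V : (ι → ℝ) × (ι → ℝ)) :
    fderiv ℝ (uncurry (pullback e φ)) (x, y) V =
      fderiv ℝ (uncurry φ) (x ∘ e, y ∘ e) (V.1 ∘ e, V.2 ∘ e) := by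
  set S := (Function.ExtendByZero.linearMap ℝ e).toContinuousLinearMap
  have hS : RightInverse S (funLeftCLM e) := funLeftCLM_rightInverse he
  exact congrArg (· V) (fderiv_comp_of_rightInverse (L := (funLeftCLM e).prodMap (funLeftCLM e))
    (S := S.prodMap S) (fun z => Prod.ext (hS z.1) (hS z.2)) (uncurry φ) (x, y))

variable [DecidableEq ι]

theorem pdy_pullback (β : ι) (x y : ι → ℝ) :
    pdy (pullback e φ) β x y = fderiv ℝ (φ (x ∘ e)) (y ∘ e) (Pi.single β 1 ∘ e) :=
  fderiv_comp_funLeft he (φ (x ∘ e)) y _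

theorem pdx_pullback (β : ι) (x y : ι → ℝ) :
    pdx (pullback e φ) β x y = fderiv ℝ (fun x => φ x (y ∘ e)) (x ∘ e) (Pi.single β 1 ∘ e) :=
  fderiv_comp_funLeft he (fun x => φ x (y ∘ e)) x _

theorem pdy_pullback_of_notMem_range {β : ι} (hβ : β ∉ range e) : pdy (pullback e φ) β = 0 := by
  ext x y; rw [pdy_pullback he, Pi.single_comp_of_notMem_range hβ, map_zero]; rfl

theorem pdx_pullback_of_notMem_range {β : ι} (hβ : β ∉ range e) : pdx (pullback e φ) β = 0 := by
  ext x y; rw [pdx_pullback he, Pi.single_comp_of_notMem_range hβ, map_zero]; rfl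

variable [DecidableEq κ]

theorem pdy_pullback_apply (j : κ) : pdy (pullback e φ) (e j) = pullback e (pdy φ j) := by
  ext x y; rw [pdy_pullback he, Pi.single_comp_of_injective he]; rfl

theorem pdx_pullback_apply (j : κ) : pdx (pullback e φ) (e j) = pullback e (pdx φ j) := by
  ext x y; rw [pdx_pullback he, Pi.single_comp_of_injective he]; rfl

end Pullback

section BerwaldPullback

variable {ι κ : Type*} [Fintype ι] [DecidableEq ι] {W : Set ((ι → ℝ) × (ι → ℝ))}
  {g : (ι → ℝ) → (ι → ℝ) → ℝ}

theorem Set.EqOn.pdy_zero (h : EqOn (uncurry g) 0 W) (hW : IsOpen W) (β : ι) :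
    EqOn (uncurry (pdy g β)) 0 W := by
  intro p hp
  rw [h.pdy_congr (g₂ := 0) hW β hp]
  simp [uncurry, pdy]

variable [Fintype κ] {e : κ → ι} {φ : (κ → ℝ) → (κ → ℝ) → ℝ} (hW : IsOpen W) (he : Injective e)
include hW he

theorem Set.EqOn.pdy_pullback_of_notMem_range (h : EqOn (uncurry g) (uncurry (pullback e φ)) W)
    {β : ι} (hβ : β ∉ range e) : EqOn (uncurry (pdy g β)) 0 W := by
  intro p hp
  have := h.pdy_congr hW β hp
  rwa [_root_.pdy_pullback_of_notMem_range he hβ] at this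

theorem Set.EqOn.pdy_pullback [DecidableEq κ] (h : EqOn (uncurry g) (uncurry (pullback e φ)) W)
    (j : κ) : EqOn (uncurry (pdy g (e j))) (uncurry (pullback e (pdy φ j))) W := by
  simpa only [pdy_pullback_apply he] using h.pdy_congr hW (e j)

theorem Set.EqOn.exists_pdy_pullback (h : EqOn (uncurry g) (uncurry (pullback e φ)) W) (β : ι) :
    ∃ ψ : (κ → ℝ) → (κ → ℝ) → ℝ, EqOn (uncurry (pdy g β)) (uncurry (pullback e ψ)) W := by
  classical
  by_cases hβ : β ∈ range e
  · obtain ⟨j, rfl⟩ := hβ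
    exact ⟨pdy φ j, h.pdy_pullback hW he j⟩
  · exact ⟨0, h.pdy_pullback_of_notMem_range hW he hβ⟩

theorem berwaldCurv_eqOn_pullback [DecidableEq κ] {F : (ι → ℝ) → (ι → ℝ) → ℝ}
    {Φ : (κ → ℝ) → (κ → ℝ) → ℝ} {α : ι} {i : κ}
    (h : EqOn (uncurry (spray F α)) (uncurry (pullback e (spray Φ i))) W) (j l m : κ) :
    EqOn (uncurry (berwaldCurv F α (e j) (e l) (e m)))
      (uncurry (pullback e (berwaldCurv Φ i j l m))) W :=
  ((h.pdy_pullback hW he m).pdy_pullback hW he l).pdy_pullback hW he j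

theorem berwaldCurv_eqOn_zero {F : (ι → ℝ) → (ι → ℝ) → ℝ} {α : ι}
    (h : EqOn (uncurry (spray F α)) (uncurry (pullback e φ)) W) {β γ η : ι}
    (hmix : β ∉ range e ∨ γ ∉ range e ∨ η ∉ range e) :
    EqOn (uncurry (berwaldCurv F α β γ η)) 0 W := by
  obtain ⟨ψ, hψ⟩ := h.exists_pdy_pullback hW he η
  obtain ⟨χ, hχ⟩ := hψ.exists_pdy_pullback hW he γ
  rcases hmix with hβ | hγ | hη
  · exact hχ.pdy_pullback_of_notMem_range hW he hβ
  · exact (hψ.pdy_pullback_of_notMem_range hW he hγ).pdy_zero hW β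
  · exact ((h.pdy_pullback_of_notMem_range hW he hη).pdy_zero hW γ).pdy_zero hW β

end BerwaldPullback

section EulerLagrange

variable {ι : Type*} [Fintype ι] [DecidableEq ι] {x y : ι → ℝ} {V : (ι → ℝ) × (ι → ℝ)}

/-- For `V = (y, -w)` these are the Euler–Lagrange equations `d/dt (∂G/∂y^β) = ∂G/∂x^β` and the
conservation of `G` along the second-order flow `ẋ = y`, `ẏ = -w`. -/
structure IsEulerLagrangeVector (G : (ι → ℝ) → (ι → ℝ) → ℝ) (x y : ι → ℝ)
    (V : (ι → ℝ) × (ι → ℝ)) : Prop where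
  fderiv_eq_zero : fderiv ℝ (uncurry G) (x, y) V = 0
  fderiv_pdy_eq (β : ι) : fderiv ℝ (uncurry (pdy G β)) (x, y) V = pdx G β x y

theorem IsEulerLagrangeVector.pullback {κ : Type*} [Fintype κ] [DecidableEq κ] {e : κ → ι}
    (he : Injective e) {φ : (κ → ℝ) → (κ → ℝ) → ℝ}
    (h : IsEulerLagrangeVector φ (x ∘ e) (y ∘ e) (V.1 ∘ e, V.2 ∘ e)) :
    IsEulerLagrangeVector (pullback e φ) x y V where
  fderiv_eq_zero := (fderiv_uncurry_pullback he x y V).trans h.fderiv_eq_zero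
  fderiv_pdy_eq β := by
    by_cases hβ : β ∈ range e
    · obtain ⟨j, rfl⟩ := hβ
      rw [pdy_pullback_apply he, pdx_pullback_apply he, fderiv_uncurry_pullback he]
      exact h.fderiv_pdy_eq j
    · rw [pdy_pullback_of_notMem_range he hβ, pdx_pullback_of_notMem_range he hβ]
      show fderiv ℝ (fun _ => (0 : ℝ)) (x, y) V = 0
      simp

/-- The second derivatives of `f` enter only through the derivatives of `f_s(K, H)` and
`f_t(K, H)` along `V`, and these vanish because `V` annihilates `K` and `H`. -/
theorem IsEulerLagrangeVector.comp₂ {K H : (ι → ℝ) → (ι → ℝ) → ℝ} {f : ℝ → ℝ → ℝ}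
    {s : Set ((ι → ℝ) × (ι → ℝ))} {t : Set (ℝ × ℝ)} (hs : IsOpen s)
    (hK : ContDiffOn ℝ ∞ (uncurry K) s) (hH : ContDiffOn ℝ ∞ (uncurry H) s) (ht : IsOpen t)
    (hf : ContDiffOn ℝ ∞ (uncurry f) t) (hst : MapsTo (fun p => (uncurry K p, uncurry H p)) s t)
    (hxy : (x, y) ∈ s) (hKV : IsEulerLagrangeVector K x y V)
    (hHV : IsEulerLagrangeVector H x y V) :
    IsEulerLagrangeVector (fun x y => f (K x y) (H x y)) x y V := by
  have hdiff {g : (ι → ℝ) → (ι → ℝ) → ℝ} (hg : ContDiffOn ℝ ∞ (uncurry g) s) {q} (hq : q ∈ s) :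
      DifferentiableAt ℝ (uncurry g) q :=
    (hg.contDiffAt (hs.mem_nhds hq)).differentiableAt (by simp)
  have hdiff₂ {g : ℝ → ℝ → ℝ} (hg : ContDiffOn ℝ ∞ (uncurry g) t) {q} (hq : q ∈ s) :
      DifferentiableAt ℝ (uncurry g) (uncurry K q, uncurry H q) :=
    (hg.contDiffAt (ht.mem_nhds (hst hq))).differentiableAt (by simp)
  have hstat {g : ℝ → ℝ → ℝ} (hg : ContDiffOn ℝ ∞ (uncurry g) t) :
      fderiv ℝ (uncurry fun x y => g (K x y) (H x y)) (x, y) V = 0 := by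
    rw [fderiv_uncurry_comp₂_apply (hdiff₂ hg hxy) (hdiff hK hxy) (hdiff hH hxy),
      hKV.fderiv_eq_zero, hHV.fderiv_eq_zero, zero_mul, zero_mul, add_zero]
  refine ⟨hstat hf, fun β => ?_⟩
  have hS := hf.uncurry_pderivS ht
  have hT := hf.uncurry_pderivT ht
  have hpdy : EqOn (uncurry (pdy (fun x y => f (K x y) (H x y)) β))
      (uncurry (pdy K β) * uncurry (fun x y => pderivS f (K x y) (H x y)) +
        uncurry (pdy H β) * uncurry (fun x y => pderivT f (K x y) (H x y))) s :=
    fun q hq => pdy_comp₂ (hdiff₂ hf hq) (hdiff hK hq) (hdiff hH hq) β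
  have hderiv := ((hdiff (hK.uncurry_pdy hs β) hxy).hasFDerivAt.mul
      (hasFDerivAt_uncurry_comp₂ (hdiff₂ hS hxy) (hdiff hK hxy)
        (hdiff hH hxy)).differentiableAt.hasFDerivAt).add
    ((hdiff (hH.uncurry_pdy hs β) hxy).hasFDerivAt.mul
      (hasFDerivAt_uncurry_comp₂ (hdiff₂ hT hxy) (hdiff hK hxy)
        (hdiff hH hxy)).differentiableAt.hasFDerivAt)
  rw [(hpdy.eventuallyEq_of_mem (hs.mem_nhds hxy)).fderiv_eq, hderiv.fderiv,
    pdx_comp₂ (hdiff₂ hf hxy) (hdiff hK hxy) (hdiff hH hxy)]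
  simp only [_root_.add_apply, _root_.smul_apply, smul_eq_mul,
    hstat hS, hstat hT, hKV.fderiv_pdy_eq, hHV.fderiv_pdy_eq, uncurry_apply_pair]
  ring

end EulerLagrange

section Finsler

variable {ι : Type*} [Fintype ι] [DecidableEq ι] {U : Set (ι → ℝ)}
  {Φ : (ι → ℝ) → (ι → ℝ) → ℝ} {x y : ι → ℝ}

noncomputable def sprayRhs (G : (ι → ℝ) → (ι → ℝ) → ℝ) (x y : ι → ℝ) : ι → ℝ :=
  fun β => ∑ γ, pdx (pdy G β) γ x y * y γ - pdx G β x y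

theorem two_mul_spray (Φ : (ι → ℝ) → (ι → ℝ) → ℝ) (x y : ι → ℝ) :
    (fun α => 2 * spray Φ α x y) =
      (fundTensor Φ x y)⁻¹ *ᵥ sprayRhs (fun x y => Φ x y ^ 2) x y := by
  ext α
  simp only [spray, sprayRhs, mulVec, dotProduct]
  ring

theorem IsFinslerMetric.contDiffOn_sq (hΦ : IsFinslerMetric U Φ) :
    ContDiffOn ℝ ∞ (uncurry fun x y => Φ x y ^ 2) (U ×ˢ {y | y ≠ 0}) :=
  hΦ.smooth

theorem IsFinslerMetric.prod_mem_nhds_s11 (hΦ : IsFinslerMetric U Φ) (hx : x ∈ U) (hy : y ≠ 0) :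
    U ×ˢ {y | y ≠ 0} ∈ nhds (x, y) :=
  (hΦ.isOpen.prod isOpen_ne).mem_nhds (mk_mem_prod hx hy)

theorem IsFinslerMetric.differentiableAt_sq (hΦ : IsFinslerMetric U Φ) (hx : x ∈ U) (hy : y ≠ 0) :
    DifferentiableAt ℝ (uncurry fun x y => Φ x y ^ 2) (x, y) :=
  (hΦ.contDiffOn_sq.contDiffAt (hΦ.prod_mem_nhds_s11 hx hy)).differentiableAt (by simp)

theorem IsFinslerMetric.differentiableAt_pdy_sq (hΦ : IsFinslerMetric U Φ) (hx : x ∈ U)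
    (hy : y ≠ 0) (β : ι) :
    DifferentiableAt ℝ (uncurry (pdy (fun x y => Φ x y ^ 2) β)) (x, y) :=
  ((hΦ.contDiffOn_sq.uncurry_pdy (hΦ.isOpen.prod isOpen_ne) β).contDiffAt
    (hΦ.prod_mem_nhds_s11 hx hy)).differentiableAt (by simp)

theorem IsFinslerMetric.sum_pdy_sq_mul (hΦ : IsFinslerMetric U Φ) (hx : x ∈ U) (hy : y ≠ 0) :
    ∑ α, pdy (fun x y => Φ x y ^ 2) α x y * y α = 2 * Φ x y ^ 2 := by
  have hxy : DifferentiableAt ℝ (uncurry fun x y => Φ x y ^ 2) ((fun y' => (x, y')) y) :=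
    hΦ.differentiableAt_sq hx hy
  have hslice : DifferentiableAt ℝ (fun y => Φ x y ^ 2) y :=
    hxy.comp y ((differentiableAt_const x).prodMk differentiableAt_id)
  calc ∑ α, pdy (fun x y => Φ x y ^ 2) α x y * y α = fderiv ℝ (fun y => Φ x y ^ 2) y y :=
        by unfold pdy; exact (fderiv ℝ (fun y => Φ x y ^ 2) y).sum_apply_single_mul y
    _ = 2 * Φ x y ^ 2 := fderiv_apply_self_of_homogeneous hslice fun c => by
        rw [hΦ.homog x hx y c, mul_pow, sq_abs]

/-- Differentiate Euler's relation `y^α ∂G/∂y^α = 2G` along `(y, v)`. -/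
theorem IsFinslerMetric.fderiv_sq_apply_eq_zero (hΦ : IsFinslerMetric U Φ) (hx : x ∈ U)
    (hy : y ≠ 0) {v : ι → ℝ}
    (h : ∀ β, fderiv ℝ (uncurry (pdy (fun x y => Φ x y ^ 2) β)) (x, y) (y, v) =
      pdx (fun x y => Φ x y ^ 2) β x y) :
    fderiv ℝ (uncurry fun x y => Φ x y ^ 2) (x, y) (y, v) = 0 := by
  have heuler : (fun q : (ι → ℝ) × (ι → ℝ) =>
      ∑ α, uncurry (pdy (fun x y => Φ x y ^ 2) α) q * (ContinuousLinearMap.proj α ∘L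
        ContinuousLinearMap.snd ℝ (ι → ℝ) (ι → ℝ)) q) =ᶠ[nhds (x, y)]
      fun q => 2 * uncurry (fun x y => Φ x y ^ 2) q :=
    Filter.eventually_of_mem (hΦ.prod_mem_nhds_s11 hx hy) fun q hq => hΦ.sum_pdy_sq_mul hq.1 hq.2
  have hL := HasFDerivAt.fun_sum (u := Finset.univ) fun α _ =>
    (hΦ.differentiableAt_pdy_sq hx hy α).hasFDerivAt.mul
      (ContinuousLinearMap.proj α ∘L ContinuousLinearMap.snd ℝ (ι → ℝ) (ι → ℝ)).hasFDerivAt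
  have hR := ((hΦ.differentiableAt_sq hx hy).hasFDerivAt.const_mul 2).congr_of_eventuallyEq
    heuler
  have := congrArg (· (y, v)) (hL.unique hR)
  simp only [_root_.sum_apply, _root_.add_apply, _root_.smul_apply, smul_eq_mul, h,
    ContinuousLinearMap.comp_apply, ContinuousLinearMap.coe_snd', ContinuousLinearMap.proj_apply,
    uncurry_apply_pair, Finset.sum_add_distrib] at this
  rw [fderiv_uncurry_apply_eq_sum (hΦ.differentiableAt_sq hx hy)] at this ⊢
  simp only [mul_comm (y _)] at this
  linarith

theorem IsFinslerMetric.fderiv_pdy_sq_apply (hΦ : IsFinslerMetric U Φ) (hx : x ∈ U)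
    (hy : y ≠ 0) (w : ι → ℝ) (β : ι) :
    fderiv ℝ (uncurry (pdy (fun x y => Φ x y ^ 2) β)) (x, y) (y, -w) =
      pdx (fun x y => Φ x y ^ 2) β x y + sprayRhs (fun x y => Φ x y ^ 2) x y β -
        (fundTensor Φ x y *ᵥ w) β := by
  have hsymm (α : ι) : fundTensor Φ x y β α = fundTensor Φ x y α β := by
    simpa using ((hΦ.posDef x hx y hy).isHermitian.apply β α).symm
  rw [fderiv_uncurry_apply_eq_sum (hΦ.differentiableAt_pdy_sq hx hy β)]
  simp only [sprayRhs, mulVec, dotProduct, hsymm, Pi.neg_apply, mul_neg, Finset.sum_neg_distrib]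
  unfold fundTensor
  ring

theorem IsFinslerMetric.isEulerLagrangeVector_iff (hΦ : IsFinslerMetric U Φ) (hx : x ∈ U)
    (hy : y ≠ 0) (w : ι → ℝ) :
    IsEulerLagrangeVector (fun x y => Φ x y ^ 2) x y (y, -w) ↔
      w = fun α => 2 * spray Φ α x y := by
  have hdet : IsUnit (fundTensor Φ x y).det :=
    isUnit_iff_ne_zero.2 (hΦ.posDef x hx y hy).det_pos.ne'
  have hEL (β : ι) : fderiv ℝ (uncurry (pdy (fun x y => Φ x y ^ 2) β)) (x, y) (y, -w) =
      pdx (fun x y => Φ x y ^ 2) β x y ↔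
      (fundTensor Φ x y *ᵥ w) β = sprayRhs (fun x y => Φ x y ^ 2) x y β := by
    rw [hΦ.fderiv_pdy_sq_apply hx hy]
    constructor <;> intro h <;> linarith
  rw [two_mul_spray]
  constructor
  · intro h
    have hw : fundTensor Φ x y *ᵥ w = sprayRhs (fun x y => Φ x y ^ 2) x y :=
      funext fun β => (hEL β).1 (h.fderiv_pdy_eq β)
    rw [← hw, mulVec_mulVec, nonsing_inv_mul _ hdet, one_mulVec]
  · intro hw
    have hEL' (β : ι) := (hEL β).2 (by rw [hw, mulVec_mulVec, mul_nonsing_inv _ hdet, one_mulVec])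
    exact ⟨hΦ.fderiv_sq_apply_eq_zero hx hy hEL', hEL'⟩

end Finsler

section MinkowskianProduct

def productSlit {ι₁ ι₂ : Type*} (U₁ : Set (ι₁ → ℝ)) (U₂ : Set (ι₂ → ℝ)) :
    Set ((ι₁ ⊕ ι₂ → ℝ) × (ι₁ ⊕ ι₂ → ℝ)) :=
  {p | (p.1 ∘ Sum.inl, p.2 ∘ Sum.inl) ∈ U₁ ×ˢ {z | z ≠ 0}} ∩
    {p | (p.1 ∘ Sum.inr, p.2 ∘ Sum.inr) ∈ U₂ ×ˢ {z | z ≠ 0}}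

theorem IsOpen.productSlit {ι₁ ι₂ : Type*} {U₁ : Set (ι₁ → ℝ)} {U₂ : Set (ι₂ → ℝ)}
    (h₁ : IsOpen U₁) (h₂ : IsOpen U₂) : IsOpen (productSlit U₁ U₂) :=
  (h₁.prod isOpen_ne).setOf_comp_mem.inter (h₂.prod isOpen_ne).setOf_comp_mem

variable {m n : ℕ} {U₁ : Set (Fin m → ℝ)} {U₂ : Set (Fin n → ℝ)}
  {F₁ : (Fin m → ℝ) → (Fin m → ℝ) → ℝ} {F₂ : (Fin n → ℝ) → (Fin n → ℝ) → ℝ} {f : ℝ → ℝ → ℝ}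
  {F : (Fin m ⊕ Fin n → ℝ) → (Fin m ⊕ Fin n → ℝ) → ℝ}

theorem IsMinkowskianProduct.sq_eq (hprod : IsMinkowskianProduct U₁ U₂ F₁ F₂ f F) :
    (fun x y => F x y ^ 2) = fun x y => f (pullback Sum.inl (fun x y => F₁ x y ^ 2) x y)
      (pullback Sum.inr (fun x y => F₂ x y ^ 2) x y) := by
  ext x y
  rw [hprod.F_def, Real.sq_sqrt
    (hprod.f_nonneg _ (mem_Ici.2 (sq_nonneg _)) _ (mem_Ici.2 (sq_nonneg _)))]
  rfl

theorem IsMinkowskianProduct.two_mul_spray (hprod : IsMinkowskianProduct U₁ U₂ F₁ F₂ f F)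
    {x y : Fin m ⊕ Fin n → ℝ} (hp : (x, y) ∈ productSlit U₁ U₂) :
    (fun α => 2 * spray F α x y) = Sum.elim (fun i => 2 * spray F₁ i (x ∘ Sum.inl) (y ∘ Sum.inl))
      (fun i => 2 * spray F₂ i (x ∘ Sum.inr) (y ∘ Sum.inr)) := by
  set w := Sum.elim (fun i => 2 * spray F₁ i (x ∘ Sum.inl) (y ∘ Sum.inl))
    (fun i => 2 * spray F₂ i (x ∘ Sum.inr) (y ∘ Sum.inr))
  have hK : IsEulerLagrangeVector (pullback Sum.inl fun x y => F₁ x y ^ 2) x y (y, -w) :=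
    .pullback Sum.inl_injective ((hprod.finsler₁.isEulerLagrangeVector_iff hp.1.1 hp.1.2 _).2 rfl)
  have hH : IsEulerLagrangeVector (pullback Sum.inr fun x y => F₂ x y ^ 2) x y (y, -w) :=
    .pullback Sum.inr_injective ((hprod.finsler₂.isEulerLagrangeVector_iff hp.2.1 hp.2.2 _).2 rfl)
  have hmaps : MapsTo (fun q => (uncurry (pullback Sum.inl fun x y => F₁ x y ^ 2) q,
      uncurry (pullback Sum.inr fun x y => F₂ x y ^ 2) q)) (productSlit U₁ U₂)
      (Ioi 0 ×ˢ Ioi 0) := fun q hq =>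
    ⟨pow_pos (hprod.finsler₁.pos _ hq.1.1 _ hq.1.2) 2,
      pow_pos (hprod.finsler₂.pos _ hq.2.1 _ hq.2.2) 2⟩
  have hG := hK.comp₂ (hprod.finsler₁.isOpen.productSlit hprod.finsler₂.isOpen)
    (hprod.finsler₁.contDiffOn_sq.pullback.mono inter_subset_left)
    (hprod.finsler₂.contDiffOn_sq.pullback.mono inter_subset_right)
    (isOpen_Ioi.prod isOpen_Ioi) hprod.f_smooth hmaps hp hH
  rw [← hprod.sq_eq] at hG
  have hy : y ≠ 0 := fun h => hp.1.2 (by rw [h]; rfl)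
  exact ((hprod.finsler.isEulerLagrangeVector_iff ⟨hp.1.1, hp.2.1⟩ hy w).1 hG).symm

theorem IsMinkowskianProduct.spray_inl_eqOn (hprod : IsMinkowskianProduct U₁ U₂ F₁ F₂ f F)
    (i : Fin m) : EqOn (uncurry (spray F (Sum.inl i))) (uncurry (pullback Sum.inl (spray F₁ i)))
      (productSlit U₁ U₂) := fun _ hp =>
  (mul_right_inj' two_ne_zero).1 (congrFun (hprod.two_mul_spray hp) (Sum.inl i))

theorem IsMinkowskianProduct.spray_inr_eqOn (hprod : IsMinkowskianProduct U₁ U₂ F₁ F₂ f F)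
    (i : Fin n) : EqOn (uncurry (spray F (Sum.inr i))) (uncurry (pullback Sum.inr (spray F₂ i)))
      (productSlit U₁ U₂) := fun _ hp =>
  (mul_right_inj' two_ne_zero).1 (congrFun (hprod.two_mul_spray hp) (Sum.inr i))

end MinkowskianProduct

/-- The Berwald curvature of a Minkowskian product Finsler metric splits on the
pure blocks, and every component with mixed block indices vanishes. -/
theorem berwaldCurv_of_minkowskian_product {m n : ℕ}
    (U₁ : Set (Fin m → ℝ)) (U₂ : Set (Fin n → ℝ))
    (F₁ : (Fin m → ℝ) → (Fin m → ℝ) → ℝ) (F₂ : (Fin n → ℝ) → (Fin n → ℝ) → ℝ)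
    (f : ℝ → ℝ → ℝ) (F : (Fin m ⊕ Fin n → ℝ) → (Fin m ⊕ Fin n → ℝ) → ℝ)
    (hprod : IsMinkowskianProduct U₁ U₂ F₁ F₂ f F) :
    ∀ x : Fin m ⊕ Fin n → ℝ, (x ∘ Sum.inl) ∈ U₁ → (x ∘ Sum.inr) ∈ U₂ →
    ∀ y : Fin m ⊕ Fin n → ℝ, (y ∘ Sum.inl) ≠ 0 → (y ∘ Sum.inr) ≠ 0 →
      (∀ i j l h : Fin m,
        berwaldCurv F (Sum.inl i) (Sum.inl j) (Sum.inl l) (Sum.inl h) x y =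
          berwaldCurv F₁ i j l h (x ∘ Sum.inl) (y ∘ Sum.inl)) ∧
      (∀ i' j' l' h' : Fin n,
        berwaldCurv F (Sum.inr i') (Sum.inr j') (Sum.inr l') (Sum.inr h') x y =
          berwaldCurv F₂ i' j' l' h' (x ∘ Sum.inr) (y ∘ Sum.inr)) ∧
      (∀ (i : Fin m) (β γ η : Fin m ⊕ Fin n),
        ((∃ j' : Fin n, β = Sum.inr j') ∨ (∃ l' : Fin n, γ = Sum.inr l') ∨
          (∃ h' : Fin n, η = Sum.inr h')) →
        berwaldCurv F (Sum.inl i) β γ η x y = 0) ∧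
      (∀ (i' : Fin n) (β γ η : Fin m ⊕ Fin n),
        ((∃ j : Fin m, β = Sum.inl j) ∨ (∃ l : Fin m, γ = Sum.inl l) ∨
          (∃ h : Fin m, η = Sum.inl h)) →
        berwaldCurv F (Sum.inr i') β γ η x y = 0) := by
  intro x hx₁ hx₂ y hy₁ hy₂
  have hW := hprod.finsler₁.isOpen.productSlit hprod.finsler₂.isOpen
  have hp : (x, y) ∈ productSlit U₁ U₂ := ⟨⟨hx₁, hy₁⟩, ⟨hx₂, hy₂⟩⟩
  have notMem_inl {δ : Fin m ⊕ Fin n} : (∃ j, δ = Sum.inr j) → δ ∉ range Sum.inl := by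
    rintro ⟨j, rfl⟩; simp
  have notMem_inr {δ : Fin m ⊕ Fin n} : (∃ j, δ = Sum.inl j) → δ ∉ range Sum.inr := by
    rintro ⟨j, rfl⟩; simp
  exact ⟨fun i j l h =>
      (berwaldCurv_eqOn_pullback hW Sum.inl_injective (hprod.spray_inl_eqOn i) j l h hp :),
    fun i j l h =>
      (berwaldCurv_eqOn_pullback hW Sum.inr_injective (hprod.spray_inr_eqOn i) j l h hp :),
    fun i _ _ _ hmix => (berwaldCurv_eqOn_zero hW Sum.inl_injective (hprod.spray_inl_eqOn i)
      (hmix.imp notMem_inl (.imp notMem_inl notMem_inl)) hp :),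
    fun i _ _ _ hmix => (berwaldCurv_eqOn_zero hW Sum.inr_injective (hprod.spray_inr_eqOn i)
      (hmix.imp notMem_inr (.imp notMem_inr notMem_inr)) hp :)⟩
end
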